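/- arXiv:2407.04409 — 2 statements merged into one kernel-verified Lean document; each statement's English description precedes it below -/
import Mathlib

section
/- For every natural number n, the Lucas-Fubini number satisfies the explicit formula 𝓛_n = Σ_{k=0}^{n} Σ_{j=0}^{k} (-1)^{k-j} · C(k,j) · ((α^{k+1} + β^{k+1})/k!) · j^n, where α = (1+√5)/2 and β = (1-√5)/2. -/
/-- Stirling numbers of the second kind. -/
def stirling2 : ℕ → ℕ → ℕ
  | 0, 0 => 1
  | 0, _ + 1 => 0
  | _ + 1, 0 => 0
  | n + 1, k + 1 => stirling2 n k + (k + 1) * stirling2 n (k + 1)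

/-- Lucas numbers. -/
def lucas : ℕ → ℕ
  | 0 => 2
  | 1 => 1
  | n + 2 => lucas n + lucas (n + 1)

/-!
Expanding `x ^ n` in falling factorials, `x ^ n = ∑ₖ S(n, k) x(x-1)⋯(x-k+1) = ∑ₖ S(n, k) k! C(x, k)`,
and taking the `k`-th forward difference at `0`, which kills every `C(x, m)` with `m ≠ k`, gives
`k! S(n, k) = ∑ⱼ (-1)^(k-j) C(k, j) j ^ n`. Together with Binet's formula `Lₘ = αᵐ + βᵐ` this is the
claimed formula term by term.
-/

open Finset

namespace Nat

theorem mul_descFactorial (x k : ℕ) :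
    x * x.descFactorial k = x.descFactorial (k + 1) + k * x.descFactorial k := by
  rcases le_or_gt k x with hkx | hxk
  · rw [descFactorial_succ, ← add_mul, Nat.sub_add_cancel hkx]
  · simp [descFactorial_of_lt hxk]

theorem pow_eq_sum_stirlingSecond_mul_descFactorial (x n : ℕ) :
    x ^ n = ∑ k ∈ range (n + 1), stirlingSecond n k * x.descFactorial k := by
  induction n with
  | zero => simp
  | succ n ih =>
    set f := fun k => k * stirlingSecond n k * x.descFactorial k
    have hshift : ∑ k ∈ range (n + 1), f (k + 1) = ∑ k ∈ range (n + 1), f k := by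
      simpa [f, stirlingSecond_eq_zero_of_lt] using
        (sum_range_succ' f (n + 1)).symm.trans (sum_range_succ f (n + 1))
    calc x ^ (n + 1)
        = ∑ k ∈ range (n + 1), (stirlingSecond n k * x.descFactorial (k + 1) + f k) := by
          simp only [pow_succ', ih, mul_sum, f]
          refine sum_congr rfl fun k _ => ?_
          rw [mul_left_comm, mul_descFactorial]
          ring
      _ = ∑ k ∈ range (n + 1), (f (k + 1) + stirlingSecond n k * x.descFactorial (k + 1)) := by
          rw [sum_add_distrib, sum_add_distrib, hshift, add_comm]
      _ = _ := by
          rw [sum_range_succ' _ (n + 1)]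
          simp [f, stirlingSecond_succ_succ, add_mul, mul_assoc]

theorem factorial_mul_stirlingSecond_eq_sum (n k : ℕ) :
    (k ! * stirlingSecond n k : ℤ) =
      ∑ j ∈ range (k + 1), (-1) ^ (k - j) * k.choose j * (j : ℤ) ^ n := by
  have hpow : (fun x : ℕ => (x : ℤ) ^ n) =
      ∑ m ∈ range (n + 1), (stirlingSecond n m * m ! : ℤ) • fun x : ℕ => (x.choose m : ℤ) := by
    ext x
    simp only [Finset.sum_apply, Pi.smul_apply, smul_eq_mul]
    exact_mod_cast (pow_eq_sum_stirlingSecond_mul_descFactorial x n).trans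
      (sum_congr rfl fun m _ => by rw [descFactorial_eq_factorial_mul_choose, mul_assoc])
  have hdiff := fwdDiff_iter_eq_sum_shift 1 (fun x : ℕ => (x : ℤ) ^ n) k 0
  rw [hpow, fwdDiff_iter_finsetSum, Finset.sum_apply] at hdiff
  simp only [fwdDiff_iter_const_smul, Pi.smul_apply, fwdDiff_iter_choose_zero, smul_eq_mul,
    mul_ite, mul_one, mul_zero, zero_add, sum_ite_eq] at hdiff
  rw [← hdiff]
  split_ifs with hkn
  · ring
  · simp [stirlingSecond_eq_zero_of_lt (by simpa using hkn)]

end Nat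

theorem stirling2_eq_stirlingSecond : stirling2 = Nat.stirlingSecond := by
  funext n k
  induction n generalizing k with
  | zero => cases k <;> rfl
  | succ n ih =>
    cases k with
    | zero => rfl
    | succ k => rw [stirling2, Nat.stirlingSecond_succ_succ, ih, ih, add_comm]

open Real goldenRatio in
theorem lucas_eq_goldenRatio_pow_add_goldenConj_pow : ∀ n, (lucas n : ℝ) = φ ^ n + ψ ^ n
  | 0 => by norm_num [lucas]
  | 1 => by norm_num [lucas]
  | n + 2 => by
    rw [lucas, Nat.cast_add, lucas_eq_goldenRatio_pow_add_goldenConj_pow n,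
      lucas_eq_goldenRatio_pow_add_goldenConj_pow (n + 1), pow_add φ n 2, pow_add ψ n 2,
      goldenRatio_sq, goldenConj_sq]
    ring

open Finset Real in
/-- Explicit formula for the Lucas-Fubini numbers. -/
theorem lucasFubini_explicit (n : ℕ) :
    (∑ k ∈ range (n + 1), (lucas (k + 1) * stirling2 n k : ℝ)) =
      ∑ k ∈ range (n + 1), ∑ j ∈ range (k + 1),
        (-1 : ℝ) ^ (k - j) * (k.choose j) *
          ((((1 + Real.sqrt 5) / 2) ^ (k + 1) + ((1 - Real.sqrt 5) / 2) ^ (k + 1)) /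
            (k.factorial : ℝ)) * (j : ℝ) ^ n := by
  refine sum_congr rfl fun k _ => ?_
  have hstirling : (k.factorial * stirling2 n k : ℝ) =
      ∑ j ∈ range (k + 1), (-1) ^ (k - j) * k.choose j * (j : ℝ) ^ n := by
    rw [stirling2_eq_stirlingSecond]
    exact_mod_cast Nat.factorial_mul_stirlingSecond_eq_sum n k
  have hk : (k.factorial : ℝ) ≠ 0 := by positivity
  calc (lucas (k + 1) * stirling2 n k : ℝ)
      = lucas (k + 1) / k.factorial * (k.factorial * stirling2 n k) := by field_simp
    _ = _ := by
      rw [hstirling, mul_sum, lucas_eq_goldenRatio_pow_add_goldenConj_pow]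
      exact sum_congr rfl fun j _ => by ring
end

section
/- For every natural number n, the Lucas-Fubini number satisfies the Dobiński-like formula 𝓛_n = (α/e^α) · Σ_{k=0}^{∞} α^k k^n / k! + (β/e^β) · Σ_{k=0}^{∞} β^k k^n / k!, where α = (1+√5)/2 and β = (1−√5)/2; in particular both infinite series converge. -/
/-- Lucas-Fubini numbers. -/
def lucasFubini (n : ℕ) : ℕ :=
  ∑ k ∈ Finset.range (n + 1), lucas (k + 1) * stirling2 n k

/-! Expanding `k ^ n = ∑ j, S(n, j) * k(k-1)⋯(k-j+1)` in falling factorials and using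
`∑ k, x ^ k * k(k-1)⋯(k-j+1) / k! = x ^ j * exp x` gives Dobiński's formula
`∑ k, x ^ k * k ^ n / k! = exp x * T_n(x)` for the Touchard polynomial
`T_n(x) = ∑ j, S(n, j) * x ^ j`. Since `L (j + 1) = α ^ (j + 1) + β ^ (j + 1)`, the
Lucas-Fubini number is `α T_n(α) + β T_n(β)`. -/

open Finset

section Combinatorics

open Nat

theorem stirling2_eq_stirlingSecond_s5 : ∀ n k : ℕ, stirling2 n k = stirlingSecond n k
  | 0, 0 | 0, _ + 1 | _ + 1, 0 => rfl
  | n + 1, k + 1 => by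
    rw [stirling2, stirlingSecond_succ_succ, stirling2_eq_stirlingSecond_s5 n k,
      stirling2_eq_stirlingSecond_s5 n (k + 1), add_comm]

theorem Nat.self_mul_descFactorial (n k : ℕ) :
    n * n.descFactorial k = n.descFactorial (k + 1) + k * n.descFactorial k := by
  rcases lt_or_ge n k with h | h
  · simp [descFactorial_eq_zero_iff_lt.2 h]
  · rw [descFactorial_succ, ← add_mul, Nat.sub_add_cancel h]

theorem Nat.pow_eq_sum_stirlingSecond_mul_descFactorial_s5 (n k : ℕ) :
    k ^ n = ∑ j ∈ range (n + 1), stirlingSecond n j * k.descFactorial j := by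
  induction n with
  | zero => simp
  | succ n ih =>
    have hshift : ∑ j ∈ range (n + 1), j * (stirlingSecond n j * k.descFactorial j) =
        ∑ j ∈ range (n + 1), (j + 1) * stirlingSecond n (j + 1) * k.descFactorial (j + 1) := by
      rw [sum_range_succ', sum_range_succ, stirlingSecond_eq_zero_of_lt (lt_add_one n)]
      simp [mul_assoc]
    calc k ^ (n + 1)
        = ∑ j ∈ range (n + 1), stirlingSecond n j * (k * k.descFactorial j) := by
          rw [pow_succ, ih, sum_mul]
          exact sum_congr rfl fun j _ => by ring
      _ = ∑ j ∈ range (n + 1), stirlingSecond n j * k.descFactorial (j + 1) +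
            ∑ j ∈ range (n + 1), j * (stirlingSecond n j * k.descFactorial j) := by
          simp only [self_mul_descFactorial, mul_add, sum_add_distrib, mul_left_comm]
      _ = ∑ j ∈ range (n + 2), stirlingSecond (n + 1) j * k.descFactorial j := by
          rw [hshift, ← sum_add_distrib, sum_range_succ' _ (n + 1)]
          simp only [stirlingSecond_succ_succ, stirlingSecond_succ_zero, zero_mul, add_zero]
          exact sum_congr rfl fun j _ => by ring

end Combinatorics

section Exponential

open Nat

variable {𝕂 : Type*} [NormedField 𝕂] [NormedAlgebra ℚ 𝕂] [CompleteSpace 𝕂]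

theorem hasSum_pow_mul_descFactorial_div_factorial (x : 𝕂) (j : ℕ) :
    HasSum (fun k : ℕ => x ^ k * k.descFactorial j / k !) (x ^ j * NormedSpace.exp x) := by
  have : CharZero 𝕂 := Algebra.charZero_of_charZero ℚ 𝕂
  have hshift (m : ℕ) : x ^ (m + j) * ((m + j).descFactorial j : 𝕂) / (m + j)! =
      x ^ j * (x ^ m / m !) := by
    have h := factorial_mul_descFactorial (Nat.le_add_left j m)
    rw [Nat.add_sub_cancel] at h
    have hd : ((m + j).descFactorial j : 𝕂) ≠ 0 := by
      exact_mod_cast (descFactorial_pos.2 (Nat.le_add_left j m)).ne'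
    rw [← h, cast_mul, pow_add]
    field_simp
  have hvanish : ∑ k ∈ range j, x ^ k * (k.descFactorial j : 𝕂) / k ! = 0 :=
    sum_eq_zero fun k hk => by
      rw [descFactorial_eq_zero_iff_lt.2 (mem_range.1 hk), cast_zero, mul_zero, zero_div]
  rw [← hasSum_nat_add_iff' j, hvanish, sub_zero]
  simpa only [hshift] using (NormedSpace.expSeries_div_hasSum_exp x).mul_left (x ^ j)

def touchard {R : Type*} [Semiring R] (n : ℕ) (x : R) : R :=
  ∑ j ∈ range (n + 1), (stirlingSecond n j : R) * x ^ j

theorem hasSum_pow_mul_pow_div_factorial (x : 𝕂) (n : ℕ) :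
    HasSum (fun k : ℕ => x ^ k * (k : 𝕂) ^ n / k !) (NormedSpace.exp x * touchard n x) := by
  have hexpand (k : ℕ) : x ^ k * (k : 𝕂) ^ n / k ! =
      ∑ j ∈ range (n + 1), (stirlingSecond n j : 𝕂) * (x ^ k * k.descFactorial j / k !) := by
    rw [← cast_pow, pow_eq_sum_stirlingSecond_mul_descFactorial_s5]
    push_cast
    rw [mul_sum, sum_div]
    exact sum_congr rfl fun j _ => by ring
  have hsum := hasSum_sum (s := range (n + 1)) fun j _ =>
    (hasSum_pow_mul_descFactorial_div_factorial x j).mul_left (stirlingSecond n j : 𝕂)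
  have hvalue : ∑ j ∈ range (n + 1), (stirlingSecond n j : 𝕂) * (x ^ j * NormedSpace.exp x) =
      NormedSpace.exp x * touchard n x := by
    rw [touchard, mul_sum]
    exact sum_congr rfl fun j _ => by ring
  rwa [← funext hexpand, hvalue] at hsum

end Exponential

open Real goldenRatio

theorem coe_lucas_eq : ∀ m : ℕ, (lucas m : ℝ) = φ ^ m + ψ ^ m
  | 0 => by norm_num [lucas]
  | 1 => by norm_num [lucas]
  | m + 2 => by
    rw [lucas, Nat.cast_add, coe_lucas_eq m, coe_lucas_eq (m + 1)]
    linear_combination (-φ ^ m) * goldenRatio_sq + (-ψ ^ m) * goldenConj_sq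

theorem coe_lucasFubini_eq (n : ℕ) :
    (lucasFubini n : ℝ) = φ * touchard n φ + ψ * touchard n ψ := by
  simp only [lucasFubini, touchard, Nat.cast_sum, Nat.cast_mul, stirling2_eq_stirlingSecond_s5,
    coe_lucas_eq, mul_sum, ← sum_add_distrib]
  exact sum_congr rfl fun j _ => by ring

open Real in
/-- Dobiński-like formula for the Lucas-Fubini numbers. -/
theorem lucasFubini_dobinski (n : ℕ) :
    Summable (fun k : ℕ =>
      ((1 + Real.sqrt 5) / 2) ^ k * (k : ℝ) ^ n / (k.factorial : ℝ)) ∧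
    Summable (fun k : ℕ =>
      ((1 - Real.sqrt 5) / 2) ^ k * (k : ℝ) ^ n / (k.factorial : ℝ)) ∧
    (lucasFubini n : ℝ) =
      (((1 + Real.sqrt 5) / 2) / Real.exp ((1 + Real.sqrt 5) / 2)) *
          (∑' k : ℕ, ((1 + Real.sqrt 5) / 2) ^ k * (k : ℝ) ^ n / (k.factorial : ℝ)) +
        (((1 - Real.sqrt 5) / 2) / Real.exp ((1 - Real.sqrt 5) / 2)) *
          (∑' k : ℕ, ((1 - Real.sqrt 5) / 2) ^ k * (k : ℝ) ^ n / (k.factorial : ℝ)) := by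
  have hφ := hasSum_pow_mul_pow_div_factorial φ n
  have hψ := hasSum_pow_mul_pow_div_factorial ψ n
  rw [← exp_eq_exp_ℝ] at hφ hψ
  refine ⟨hφ.summable, hψ.summable, ?_⟩
  rw [hφ.tsum_eq, hψ.tsum_eq, coe_lucasFubini_eq]
  field_simp
end
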